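/- arXiv:2203.00987 — 2 statements merged into one kernel-verified Lean document; each statement's English description precedes it below -/
import Mathlib

section
/- Ideal safe screening rule: let u* ∈ Δ be the maximizer of D over Δ. For any index i, if |⟨a_i, u*⟩| < λ, then every minimizer x* of P over ℝ^n satisfies x*(i) = 0. -/
/-- Euclidean norm of a vector in ℝ^m. -/
noncomputable def norm2 {m : ℕ} (v : Fin m → ℝ) : ℝ := Real.sqrt (∑ i, v i ^ 2)

/-- ℓ1 norm of a vector in ℝ^n. -/
def norm1 {n : ℕ} (x : Fin n → ℝ) : ℝ := ∑ i, |x i|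

/-- Canonical inner product on ℝ^m. -/
def dot {m : ℕ} (a u : Fin m → ℝ) : ℝ := ∑ i, a i * u i

/-- Lasso primal objective P(x) = (1/2)‖y − Ax‖₂² + λ‖x‖₁. -/
noncomputable def Pobj {m n : ℕ} (A : Matrix (Fin m) (Fin n) ℝ) (y : Fin m → ℝ)
    (lam : ℝ) (x : Fin n → ℝ) : ℝ :=
  (1 / 2) * norm2 (y - A.mulVec x) ^ 2 + lam * norm1 x

/-- Lasso dual objective D(u) = (1/2)‖y‖₂² − (1/2)‖y − u‖₂². -/
noncomputable def Dobj {m : ℕ} (y u : Fin m → ℝ) : ℝ :=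
  (1 / 2) * norm2 y ^ 2 - (1 / 2) * norm2 (y - u) ^ 2

/-- Dual feasibility: u ∈ Δ iff |⟨a_i, u⟩| ≤ λ for every column a_i of A. -/
def feas {m n : ℕ} (A : Matrix (Fin m) (Fin n) ℝ) (lam : ℝ) (u : Fin m → ℝ) : Prop :=
  ∀ i : Fin n, |dot (fun j => A j i) u| ≤ lam

/-! At a Lasso minimizer `x`, perturbing one coordinate shows that the residual `r = y - A x`
is dual feasible and that `x j * ⟨a_j, r⟩ = λ |x j|` for every `j`. The duality gap splits as
`P x - D u = ‖r - u‖² / 2 + (λ ‖x‖₁ - ⟨A x, u⟩)`, where the bracket is nonnegative on `Δ` and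
vanishes at `u = r`; hence the dual maximizer is `r`, and `x i * ⟨a_i, u*⟩ = λ |x i|` with
`|⟨a_i, u*⟩| < λ` forces `x i = 0`. -/

open Matrix Filter Topology

lemma nonneg_of_forall_nonneg_mul_add_mul_sq {a b : ℝ}
    (h : ∀ s, 0 < s → s ≤ 1 → 0 ≤ a * s + b * s ^ 2) : 0 ≤ a := by
  have hlim : Tendsto (fun s => a + b * s) (𝓝[>] 0) (𝓝 a) := by
    have hcont : Continuous fun s : ℝ => a + b * s := by fun_prop
    exact (hcont.tendsto' 0 a (by simp)).mono_left nhdsWithin_le_nhds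
  refine ge_of_tendsto hlim ?_
  filter_upwards [Ioo_mem_nhdsGT one_pos] with s hs
  exact nonneg_of_mul_nonneg_right (by linarith [h s hs.1 hs.2.le]) hs.1

lemma eq_zero_of_mul_eq_mul_abs {x c lam : ℝ} (hx : x * c = lam * |x|) (hc : |c| < lam) :
    x = 0 := by
  by_contra h
  have := abs_pos.mpr h
  nlinarith [abs_mul x c, le_abs_self (x * c)]

lemma norm2_sq {m : ℕ} (v : Fin m → ℝ) : norm2 v ^ 2 = v ⬝ᵥ v := by
  rw [norm2, Real.sq_sqrt (by positivity)]
  simp only [dotProduct, sq]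

lemma norm1_add_single {n : ℕ} (x : Fin n → ℝ) (j : Fin n) (t : ℝ) :
    norm1 (x + Pi.single j t) = norm1 x + (|x j + t| - |x j|) := by
  rw [← sub_eq_iff_eq_add', norm1, norm1, ← Finset.sum_sub_distrib,
    Finset.sum_eq_single j (fun i _ hi => by simp [hi]) (by simp)]
  simp

section Lasso

variable {m n : ℕ} (A : Matrix (Fin m) (Fin n) ℝ) (y : Fin m → ℝ) (lam : ℝ)

lemma dotProduct_mulVec_eq_sum (x : Fin n → ℝ) (u : Fin m → ℝ) :
    A *ᵥ x ⬝ᵥ u = ∑ j, x j * (A.col j ⬝ᵥ u) := by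
  simp only [dotProduct, mulVec, col, transpose_apply, Finset.sum_mul, Finset.mul_sum]
  rw [Finset.sum_comm]
  exact Finset.sum_congr rfl fun _ _ => Finset.sum_congr rfl fun _ _ => by ring

lemma Pobj_add_single (x : Fin n → ℝ) (j : Fin n) (t : ℝ) :
    Pobj A y lam (x + Pi.single j t) = Pobj A y lam x - t * (A.col j ⬝ᵥ (y - A *ᵥ x))
      + (A.col j ⬝ᵥ A.col j) / 2 * t ^ 2 + lam * (|x j + t| - |x j|) := by
  have hres : y - A *ᵥ (x + Pi.single j t) = (y - A *ᵥ x) - t • A.col j := by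
    ext k
    simp [mulVec_add, col]
    ring
  simp only [Pobj, norm2_sq, norm1_add_single, hres, sub_dotProduct, dotProduct_sub,
    smul_dotProduct, dotProduct_smul, dotProduct_comm (A.col j), smul_eq_mul]
  ring

lemma Pobj_sub_Dobj (x : Fin n → ℝ) (u : Fin m → ℝ) :
    Pobj A y lam x - Dobj y u
      = norm2 (y - A *ᵥ x - u) ^ 2 / 2 + (lam * norm1 x - A *ᵥ x ⬝ᵥ u) := by
  simp only [Pobj, Dobj, norm2_sq, sub_dotProduct, dotProduct_sub, dotProduct_comm u,
    dotProduct_comm (A *ᵥ x) y]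
  ring

lemma dotProduct_mulVec_le_of_feas (x : Fin n → ℝ) {u : Fin m → ℝ} (hu : feas A lam u) :
    A *ᵥ x ⬝ᵥ u ≤ lam * norm1 x := by
  rw [dotProduct_mulVec_eq_sum, norm1, Finset.mul_sum]
  refine Finset.sum_le_sum fun j _ => ?_
  calc x j * (A.col j ⬝ᵥ u) ≤ |x j| * |A.col j ⬝ᵥ u| := by
        rw [← abs_mul]; exact le_abs_self _
    _ ≤ |x j| * lam := mul_le_mul_of_nonneg_left (hu j) (abs_nonneg _)
    _ = lam * |x j| := mul_comm _ _

variable {A y lam} {x : Fin n → ℝ}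

lemma coord_perturbation_nonneg_of_minimizer
    (hx : ∀ x', Pobj A y lam x ≤ Pobj A y lam x') (j : Fin n) (t : ℝ) :
    0 ≤ -(t * (A.col j ⬝ᵥ (y - A *ᵥ x))) + (A.col j ⬝ᵥ A.col j) / 2 * t ^ 2
      + lam * (|x j + t| - |x j|) := by
  linarith [Pobj_add_single A y lam x j t, hx (x + Pi.single j t)]

lemma feas_residual_of_minimizer
    (hx : ∀ x', Pobj A y lam x ≤ Pobj A y lam x') (hlam : 0 ≤ lam) :
    feas A lam (y - A *ᵥ x) := by
  intro j
  change |A.col j ⬝ᵥ (y - A *ᵥ x)| ≤ lam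
  have hstep : ∀ s, 0 < s → ∀ t, |t| = s → 0 ≤ -(t * (A.col j ⬝ᵥ (y - A *ᵥ x)))
      + (A.col j ⬝ᵥ A.col j) / 2 * s ^ 2 + lam * s := by
    intro s hs t ht
    have hperturb := coord_perturbation_nonneg_of_minimizer hx j t
    have habs : |x j + t| - |x j| ≤ s := by linarith [abs_add_le (x j) t]
    rw [← sq_abs t, ht] at hperturb
    linarith [mul_le_mul_of_nonneg_left habs hlam]
  rw [abs_le]
  constructor
  · have := nonneg_of_forall_nonneg_mul_add_mul_sq (a := A.col j ⬝ᵥ (y - A *ᵥ x) + lam)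
      (b := (A.col j ⬝ᵥ A.col j) / 2) fun s hs _ => by
        linarith [hstep s hs (-s) (by rw [abs_neg, abs_of_pos hs])]
    linarith
  · have := nonneg_of_forall_nonneg_mul_add_mul_sq (a := lam - A.col j ⬝ᵥ (y - A *ᵥ x))
      (b := (A.col j ⬝ᵥ A.col j) / 2) fun s hs _ => by
        linarith [hstep s hs s (abs_of_pos hs)]
    linarith

lemma mul_col_dotProduct_residual_of_minimizer
    (hx : ∀ x', Pobj A y lam x ≤ Pobj A y lam x') (hlam : 0 ≤ lam) (j : Fin n) :
    x j * (A.col j ⬝ᵥ (y - A *ᵥ x)) = lam * |x j| := by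
  refine le_antisymm ?_ ?_
  · calc x j * (A.col j ⬝ᵥ (y - A *ᵥ x)) ≤ |x j| * |A.col j ⬝ᵥ (y - A *ᵥ x)| := by
          rw [← abs_mul]; exact le_abs_self _
      _ ≤ |x j| * lam :=
          mul_le_mul_of_nonneg_left (feas_residual_of_minimizer hx hlam j) (abs_nonneg _)
      _ = lam * |x j| := mul_comm _ _
  · have := nonneg_of_forall_nonneg_mul_add_mul_sq
      (a := x j * (A.col j ⬝ᵥ (y - A *ᵥ x)) - lam * |x j|)
      (b := (A.col j ⬝ᵥ A.col j) / 2 * x j ^ 2) fun s _ hs1 => by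
        have hperturb := coord_perturbation_nonneg_of_minimizer hx j (-(s * x j))
        rw [show x j + -(s * x j) = (1 - s) * x j by ring, abs_mul,
          abs_of_nonneg (sub_nonneg.mpr hs1)] at hperturb
        linarith
    linarith

lemma mulVec_dotProduct_residual_of_minimizer
    (hx : ∀ x', Pobj A y lam x ≤ Pobj A y lam x') (hlam : 0 ≤ lam) :
    A *ᵥ x ⬝ᵥ (y - A *ᵥ x) = lam * norm1 x := by
  rw [dotProduct_mulVec_eq_sum, norm1, Finset.mul_sum]
  exact Finset.sum_congr rfl fun j _ => mul_col_dotProduct_residual_of_minimizer hx hlam j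

lemma residual_eq_of_dual_maximizer
    (hx : ∀ x', Pobj A y lam x ≤ Pobj A y lam x') (hlam : 0 ≤ lam) {ustar : Fin m → ℝ}
    (hfeas : feas A lam ustar) (hmax : ∀ u, feas A lam u → Dobj y u ≤ Dobj y ustar) :
    y - A *ᵥ x = ustar := by
  have hgap_residual := Pobj_sub_Dobj A y lam x (y - A *ᵥ x)
  rw [sub_self, norm2_sq, dotProduct_zero,
    mulVec_dotProduct_residual_of_minimizer hx hlam] at hgap_residual
  have hgap_ustar := Pobj_sub_Dobj A y lam x ustar
  have := hmax _ (feas_residual_of_minimizer hx hlam)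
  have := dotProduct_mulVec_le_of_feas A lam x hfeas
  have hsq : norm2 (y - A *ᵥ x - ustar) ^ 2 = 0 := by
    linarith [sq_nonneg (norm2 (y - A *ᵥ x - ustar))]
  rw [norm2_sq] at hsq
  exact sub_eq_zero.mp (dotProduct_self_eq_zero.mp hsq)

end Lasso

theorem lasso_ideal_screening_general (m n : ℕ)
    (A : Matrix (Fin m) (Fin n) ℝ) (y : Fin m → ℝ) (lam : ℝ) (hlam : 0 < lam)
    (ustar : Fin m → ℝ) (hfeas : feas A lam ustar)
    (hmax : ∀ u : Fin m → ℝ, feas A lam u → Dobj y u ≤ Dobj y ustar)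
    (i : Fin n) (hi : |dot (fun j => A j i) ustar| < lam)
    (xstar : Fin n → ℝ) (hx : ∀ x : Fin n → ℝ, Pobj A y lam xstar ≤ Pobj A y lam x) :
    xstar i = 0 := by
  have hkkt := mul_col_dotProduct_residual_of_minimizer hx hlam.le i
  rw [residual_eq_of_dual_maximizer hx hlam.le hfeas hmax] at hkkt
  exact eq_zero_of_mul_eq_mul_abs hkkt hi

/-- ideal safe screening rule: if |⟨a_i, u*⟩| < λ at the dual maximizer u*,
then every Lasso minimizer x* satisfies x*(i) = 0. -/
theorem lasso_ideal_screening (m n : ℕ) (hm : 0 < m) (hn : 0 < n)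
    (A : Matrix (Fin m) (Fin n) ℝ) (y : Fin m → ℝ) (lam : ℝ) (hlam : 0 < lam)
    (ustar : Fin m → ℝ) (hfeas : feas A lam ustar)
    (hmax : ∀ u : Fin m → ℝ, feas A lam u → Dobj y u ≤ Dobj y ustar)
    (i : Fin n) (hi : |dot (fun j => A j i) ustar| < lam)
    (xstar : Fin n → ℝ) (hx : ∀ x : Fin n → ℝ, Pobj A y lam xstar ≤ Pobj A y lam x) :
    xstar i = 0 :=
  lasso_ideal_screening_general m n A y lam hlam ustar hfeas hmax i hi xstar hx
end

section
/- Strict inclusion of the Hölder dome in the GAP dome (Theorem 2, second part): let x ∈ ℝ^n and u ∈ Δ be such that P(x) < P(0) = (1/2)‖y‖₂² and P(x) > D(u) (i.e., (x,u) is not primal-dual optimal). Then D_new(x,u) is a strict subset of D_gap(x,u); i.e., there exists u₀ ∈ D_gap(x,u) with u₀ ∉ D_new(x,u). -/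
/-!
Let `g = y - c`, so that `‖g‖ = r`, and let `G = P(x) - D(u)`. The point `v = c + t g` with
`t r² = G - r²` lies on the bounding hyperplane of the GAP dome, and `0 < G < 2 r²` puts it in
the ball. With `b = A x`, the identity `G = λ‖x‖₁ + ‖b‖² / 2 - ⟪b, y⟫ + 2 r²` turns the Hölder
constraint `⟪b, v⟫ ≤ λ‖x‖₁` at `v` into `δ (r² - ⟪b, g⟫) + r² ‖b‖² / 2 ≤ 0`, where
`δ = 2 r² - G`. The left side is affine in `δ`, positive at `δ = 0` because `b ≠ 0` (this is
`P(x) < P(0)`), and equal to `r² ‖2 g - b‖² / 2 ≥ 0` at `δ = 2 r²`, so it is positive on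
`[0, 2 r²)`.
-/

open RealInnerProductSpace WithLp

section InnerProductSpace

variable {E : Type*} [NormedAddCommGroup E] [InnerProductSpace ℝ E]

def dome (c : E) (r : ℝ) (a : E) (β : ℝ) : Set E :=
  Metric.closedBall c r ∩ {v | ⟪a, v⟫ ≤ β}

lemma holder_margin_pos {g b : E} (hb : b ≠ 0) {δ : ℝ} (hδ₀ : 0 ≤ δ) (hδ : δ < 2 * ‖g‖ ^ 2) :
    0 < δ * (‖g‖ ^ 2 - ⟪b, g⟫) + ‖g‖ ^ 2 * ‖b‖ ^ 2 / 2 := by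
  have h_at_zero : 0 < ‖g‖ ^ 2 * ‖b‖ ^ 2 / 2 := by
    have := norm_pos_iff.2 hb
    have : 0 < ‖g‖ ^ 2 := by linarith
    positivity
  have h_at_end : 2 * ‖g‖ ^ 2 * (‖g‖ ^ 2 - ⟪b, g⟫) + ‖g‖ ^ 2 * ‖b‖ ^ 2 / 2
      = ‖g‖ ^ 2 * ‖(2 : ℝ) • g - b‖ ^ 2 / 2 := by
    rw [norm_sub_sq_real, norm_smul, inner_smul_left, real_inner_comm]
    simp only [Real.norm_two, conj_trivial]
    ring
  have h_end_nonneg : 0 ≤ 2 * ‖g‖ ^ 2 * (‖g‖ ^ 2 - ⟪b, g⟫) + ‖g‖ ^ 2 * ‖b‖ ^ 2 / 2 := by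
    rw [h_at_end]; positivity
  nlinarith [mul_pos (sub_pos.2 hδ) h_at_zero, mul_nonneg hδ₀ h_end_nonneg]

theorem exists_mem_gapDome_not_mem_holderDome (y u b : E) {c : E} {r ℓ G : ℝ}
    (hc : c = midpoint ℝ y u) (hr : r = ‖y - u‖ / 2) (hℓ : 0 ≤ ℓ)
    (hG : G = ‖y - b‖ ^ 2 / 2 + ℓ - (‖y‖ ^ 2 / 2 - ‖y - u‖ ^ 2 / 2))
    (hP₀ : ‖y - b‖ ^ 2 / 2 + ℓ < ‖y‖ ^ 2 / 2) (hG₀ : 0 < G) :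
    ∃ v ∈ dome c r (y - c) (⟪y - c, c⟫ + G - r ^ 2), v ∉ dome c r b ℓ := by
  set g := y - c with hg_def
  have hg_norm : ‖g‖ = r := by
    rw [hg_def, hc, left_sub_midpoint, norm_smul, hr, invOf_eq_inv, norm_inv, Real.norm_two]
    ring
  have hyu : ‖y - u‖ = 2 * r := by rw [hr]; ring
  have hG_lt : G < 2 * r ^ 2 := by rw [hG, hyu]; linarith
  have hr₀ : 0 < r ^ 2 := by linarith
  have hb : b ≠ 0 := by
    rintro rfl
    rw [sub_zero] at hP₀
    linarith
  have hℓ_eq : ℓ = G - ‖b‖ ^ 2 / 2 + ⟪b, c⟫ + ⟪b, g⟫ - 2 * r ^ 2 := by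
    have hby : ⟪b, y⟫ = ⟪b, c⟫ + ⟪b, g⟫ := by rw [← inner_add_right, hg_def, add_sub_cancel]
    rw [hG, norm_sub_sq_real, hyu, real_inner_comm, hby]
    ring
  set t := (G - r ^ 2) / r ^ 2
  have ht : t * r ^ 2 = G - r ^ 2 := div_mul_cancel₀ _ hr₀.ne'
  refine ⟨c + t • g, ⟨?_, ?_⟩, fun hv => ?_⟩
  · have ht_abs : |t| ≤ 1 := by
      rw [abs_le, le_div_iff₀ hr₀, div_le_one hr₀]
      constructor <;> linarith
    rw [Metric.mem_closedBall, dist_eq_norm, add_sub_cancel_left, norm_smul, Real.norm_eq_abs,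
      hg_norm]
    exact mul_le_of_le_one_left (hg_norm ▸ norm_nonneg g) ht_abs
  · rw [Set.mem_ofPred_eq, inner_add_right, inner_smul_right, real_inner_self_eq_norm_sq, hg_norm,
      ht, add_sub_assoc]
  · have hviol := mul_le_mul_of_nonneg_left hv.2 hr₀.le
    rw [inner_add_right, inner_smul_right, hℓ_eq, mul_add, ← mul_assoc,
      mul_comm (r ^ 2) t, ht] at hviol
    have hmargin := holder_margin_pos (g := g) hb (δ := 2 * r ^ 2 - G) (by linarith)
      (by rw [hg_norm]; linarith)
    rw [hg_norm] at hmargin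
    linarith

end InnerProductSpace

lemma norm2_eq_norm_toLp {m : ℕ} (v : Fin m → ℝ) : norm2 v = ‖toLp 2 v‖ := by
  simp [norm2, EuclideanSpace.norm_eq]

lemma dot_eq_inner_toLp {m : ℕ} (a v : Fin m → ℝ) : dot a v = ⟪toLp 2 a, toLp 2 v⟫ := by
  simp only [dot, PiLp.inner_apply, Real.inner_apply]

lemma norm1_nonneg {n : ℕ} (x : Fin n → ℝ) : 0 ≤ norm1 x :=
  Finset.sum_nonneg fun i _ => abs_nonneg (x i)

lemma Pobj_eq_norm_toLp {m n : ℕ} (A : Matrix (Fin m) (Fin n) ℝ) (y : Fin m → ℝ) (lam : ℝ)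
    (x : Fin n → ℝ) :
    Pobj A y lam x = ‖toLp 2 y - toLp 2 (A.mulVec x)‖ ^ 2 / 2 + lam * norm1 x := by
  rw [Pobj, norm2_eq_norm_toLp, toLp_sub]
  ring

lemma Dobj_eq_norm_toLp {m : ℕ} (y u : Fin m → ℝ) :
    Dobj y u = ‖toLp 2 y‖ ^ 2 / 2 - ‖toLp 2 y - toLp 2 u‖ ^ 2 / 2 := by
  rw [Dobj, norm2_eq_norm_toLp, norm2_eq_norm_toLp, toLp_sub]
  ring

theorem holder_dome_strict_subset_gap_dome_general (m n : ℕ)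
    (A : Matrix (Fin m) (Fin n) ℝ) (y : Fin m → ℝ) (lam : ℝ) (hlam : 0 < lam)
    (x : Fin n → ℝ) (u : Fin m → ℝ)
    (c : Fin m → ℝ) (hc : c = fun i => (y i + u i) / 2)
    (r : ℝ) (hr : r = (1 / 2) * norm2 (y - u))
    (hP0 : Pobj A y lam x < (1 / 2) * norm2 y ^ 2)
    (hopt : Dobj y u < Pobj A y lam x) :
    ∃ u₀ : Fin m → ℝ,
      (norm2 (u₀ - c) ≤ r ∧
        dot (y - c) u₀ ≤ dot (y - c) c + (Pobj A y lam x - Dobj y u) - r ^ 2) ∧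
      ¬ (norm2 (u₀ - c) ≤ r ∧ dot (A.mulVec x) u₀ ≤ lam * norm1 x) := by
  have hc' : toLp 2 c = midpoint ℝ (toLp 2 y) (toLp 2 u) := by
    ext i
    simp only [hc, midpoint_eq_smul_add, invOf_eq_inv, smul_add, PiLp.add_apply, PiLp.smul_apply,
      smul_eq_mul]
    ring
  obtain ⟨v, ⟨hv_ball, hv_gap⟩, hv_holder⟩ :=
    exists_mem_gapDome_not_mem_holderDome (toLp 2 y) (toLp 2 u) (toLp 2 (A.mulVec x)) hc'
      (hr.trans (by rw [norm2_eq_norm_toLp, toLp_sub]; ring)) (mul_nonneg hlam.le (norm1_nonneg x))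
      (by rw [Pobj_eq_norm_toLp, Dobj_eq_norm_toLp])
      (by rw [← Pobj_eq_norm_toLp, ← norm2_eq_norm_toLp]; linarith)
      (sub_pos.2 hopt)
  refine ⟨v.ofLp, ?_⟩
  simp only [dome, Set.mem_inter_iff, Metric.mem_closedBall, dist_eq_norm, Set.mem_ofPred_eq]
    at hv_ball hv_gap hv_holder
  simp only [norm2_eq_norm_toLp, dot_eq_inner_toLp, toLp_sub, toLp_ofLp]
  exact ⟨⟨hv_ball, hv_gap⟩, hv_holder⟩

/-- Theorem 2, second part: strict inclusion of the Hölder dome in the GAP dome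
when P(x) < P(0) = (1/2)‖y‖₂² and (x,u) is not primal-dual optimal. -/
theorem holder_dome_strict_subset_gap_dome (m n : ℕ) (hm : 0 < m) (hn : 0 < n)
    (A : Matrix (Fin m) (Fin n) ℝ) (y : Fin m → ℝ) (lam : ℝ) (hlam : 0 < lam)
    (x : Fin n → ℝ) (u : Fin m → ℝ) (hu : feas A lam u)
    (c : Fin m → ℝ) (hc : c = fun i => (y i + u i) / 2)
    (r : ℝ) (hr : r = (1 / 2) * norm2 (y - u))
    (hP0 : Pobj A y lam x < (1 / 2) * norm2 y ^ 2)
    (hopt : Dobj y u < Pobj A y lam x) :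
    ∃ u₀ : Fin m → ℝ,
      (norm2 (u₀ - c) ≤ r ∧
        dot (y - c) u₀ ≤ dot (y - c) c + (Pobj A y lam x - Dobj y u) - r ^ 2) ∧
      ¬ (norm2 (u₀ - c) ≤ r ∧ dot (A.mulVec x) u₀ ≤ lam * norm1 x) :=
  holder_dome_strict_subset_gap_dome_general m n A y lam hlam x u c hc r hr hP0 hopt
end
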